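/- Let 𝒳 be a compact metric space with Borel probability measure μ and W a bounded operator on L²(𝒳,μ). For each x ∈ 𝒳 the limit θ(x) = lim_{ε↓0} ‖W π_{B_ε(x)}‖² exists, the function θ : 𝒳 → [0, ‖W‖²] is measurable, and ‖W‖_μ² ≤ ∫_𝒳 θ dμ. -/

import Mathlib

open MeasureTheory

namespace MuNorm

variable {𝒳 : Type*} [MeasurableSpace 𝒳]

/-- A finite measurable partition of `𝒳` (up to measure zero). -/
structure Partition (μ : Measure 𝒳) where
  J : ℕ
  Y : Fin J → Set 𝒳
  meas : ∀ j, MeasurableSet (Y j)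
  cover : μ (Set.univ \ ⋃ j, Y j) = 0
  disj : ∀ j k, j ≠ k → μ (Y j ∩ Y k) = 0

/-- `ℳ_χ(W) = ∑_j μ(Y_j) ‖W π_{Y_j}‖²`. -/
noncomputable def M (μ : Measure 𝒳)
    (proj : Set 𝒳 → (Lp ℂ 2 μ →L[ℂ] Lp ℂ 2 μ))
    (W : Lp ℂ 2 μ →L[ℂ] Lp ℂ 2 μ) (χ : Partition μ) : ℝ :=
  ∑ j, (μ (χ.Y j)).toReal * ‖W.comp (proj (χ.Y j))‖ ^ 2

/-- `‖W‖_μ = inf_χ sqrt(ℳ_χ(W))`. -/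
noncomputable def munorm (μ : Measure 𝒳)
    (proj : Set 𝒳 → (Lp ℂ 2 μ →L[ℂ] Lp ℂ 2 μ))
    (W : Lp ℂ 2 μ →L[ℂ] Lp ℂ 2 μ) : ℝ :=
  ⨅ χ : Partition μ, Real.sqrt (M μ proj W χ)

/-- `proj Y` is the operator of multiplication by the indicator of `Y`. -/
def IsIndicatorProj (μ : Measure 𝒳)
    (proj : Set 𝒳 → (Lp ℂ 2 μ →L[ℂ] Lp ℂ 2 μ)) : Prop :=
  ∀ Y : Set 𝒳, MeasurableSet Y → ∀ f : Lp ℂ 2 μ,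
    (proj Y f : 𝒳 → ℂ) =ᵐ[μ] Y.indicator f

open Metric Set Filter

section Helpers

variable {μ : Measure 𝒳} {proj : Set 𝒳 → (Lp ℂ 2 μ →L[ℂ] Lp ℂ 2 μ)}

lemma norm_proj_apply_le (hproj : IsIndicatorProj μ proj) {Y : Set 𝒳}
    (hY : MeasurableSet Y) (f : Lp ℂ 2 μ) : ‖proj Y f‖ ≤ ‖f‖ := by
  rw [Lp.norm_def, Lp.norm_def]
  refine ENNReal.toReal_mono (Lp.eLpNorm_ne_top f) ?_
  calc eLpNorm (proj Y f) 2 μ = eLpNorm (Y.indicator f) 2 μ :=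
        eLpNorm_congr_ae (hproj Y hY f)
    _ ≤ eLpNorm f 2 μ := eLpNorm_mono_ae (Filter.Eventually.of_forall fun x =>
        norm_indicator_le_norm_self _ _)

lemma norm_proj_le_one (hproj : IsIndicatorProj μ proj) {Y : Set 𝒳}
    (hY : MeasurableSet Y) : ‖proj Y‖ ≤ 1 :=
  ContinuousLinearMap.opNorm_le_bound _ zero_le_one fun f => by
    simpa using norm_proj_apply_le hproj hY f

lemma proj_comp_proj (hproj : IsIndicatorProj μ proj) {Y Z : Set 𝒳}
    (hY : MeasurableSet Y) (hZ : MeasurableSet Z) (hYZ : Y ⊆ Z) :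
    (proj Z).comp (proj Y) = proj Y := by
  refine ContinuousLinearMap.ext fun f => Lp.ext ?_
  have h1 := hproj Z hZ (proj Y f)
  have h2 := hproj Y hY f
  refine h1.trans ?_
  have h3 : Z.indicator (proj Y f : 𝒳 → ℂ) =ᵐ[μ] Z.indicator (Y.indicator f) := by
    filter_upwards [h2] with x hx
    simp [Set.indicator, hx]
  refine h3.trans ?_
  have h4 : Z.indicator (Y.indicator (f : 𝒳 → ℂ)) = Y.indicator f := by
    rw [Set.indicator_indicator, Set.inter_eq_self_of_subset_right hYZ]
  rw [h4]
  exact h2.symm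

lemma norm_comp_proj_mono (hproj : IsIndicatorProj μ proj)
    (W : Lp ℂ 2 μ →L[ℂ] Lp ℂ 2 μ) {Y Z : Set 𝒳}
    (hY : MeasurableSet Y) (hZ : MeasurableSet Z) (hYZ : Y ⊆ Z) :
    ‖W.comp (proj Y)‖ ≤ ‖W.comp (proj Z)‖ := by
  have h : W.comp (proj Y) = (W.comp (proj Z)).comp (proj Y) := by
    rw [ContinuousLinearMap.comp_assoc, proj_comp_proj hproj hY hZ hYZ]
  rw [h]
  calc ‖(W.comp (proj Z)).comp (proj Y)‖ ≤ ‖W.comp (proj Z)‖ * ‖proj Y‖ :=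
        ContinuousLinearMap.opNorm_comp_le _ _
    _ ≤ ‖W.comp (proj Z)‖ * 1 :=
        mul_le_mul_of_nonneg_left (norm_proj_le_one hproj hY) (norm_nonneg _)
    _ = _ := mul_one _

lemma norm_comp_proj_le (hproj : IsIndicatorProj μ proj)
    (W : Lp ℂ 2 μ →L[ℂ] Lp ℂ 2 μ) {Y : Set 𝒳} (hY : MeasurableSet Y) :
    ‖W.comp (proj Y)‖ ≤ ‖W‖ :=
  calc ‖W.comp (proj Y)‖ ≤ ‖W‖ * ‖proj Y‖ := ContinuousLinearMap.opNorm_comp_le _ _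
    _ ≤ ‖W‖ * 1 := mul_le_mul_of_nonneg_left (norm_proj_le_one hproj hY) (norm_nonneg _)
    _ = ‖W‖ := mul_one _

end Helpers

section Metric

variable {𝒴 : Type*} [MetricSpace 𝒴] [MeasurableSpace 𝒴] [BorelSpace 𝒴]
  {μ : Measure 𝒴} {proj : Set 𝒴 → (Lp ℂ 2 μ →L[ℂ] Lp ℂ 2 μ)}

/-- `g x ε = ‖W π_{B_ε(x)}‖²`. -/
noncomputable def gfun (proj : Set 𝒴 → (Lp ℂ 2 μ →L[ℂ] Lp ℂ 2 μ))
    (W : Lp ℂ 2 μ →L[ℂ] Lp ℂ 2 μ) (x : 𝒴) (ε : ℝ) : ℝ :=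
  ‖W.comp (proj (Metric.ball x ε))‖ ^ 2

/-- Right-continuous regularization of `g`. -/
noncomputable def gbar (proj : Set 𝒴 → (Lp ℂ 2 μ →L[ℂ] Lp ℂ 2 μ))
    (W : Lp ℂ 2 μ →L[ℂ] Lp ℂ 2 μ) (x : 𝒴) (ε : ℝ) : ℝ :=
  ⨅ k : ℕ, gfun proj W x (ε + 1 / (k + 1))

variable (hproj : IsIndicatorProj μ proj) (W : Lp ℂ 2 μ →L[ℂ] Lp ℂ 2 μ)

lemma gfun_nonneg (x : 𝒴) (ε : ℝ) : 0 ≤ gfun proj W x ε := sq_nonneg _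

include hproj in
lemma gfun_le (x : 𝒴) (ε : ℝ) : gfun proj W x ε ≤ ‖W‖ ^ 2 :=
  pow_le_pow_left₀ (norm_nonneg _) (norm_comp_proj_le hproj W measurableSet_ball) 2

include hproj in
lemma gfun_mono (x : 𝒴) : Monotone (gfun proj W x) := fun a b hab =>
  pow_le_pow_left₀ (norm_nonneg _)
    (norm_comp_proj_mono hproj W measurableSet_ball measurableSet_ball
      (Metric.ball_subset_ball hab)) 2

include hproj in
lemma gfun_shift (x y : 𝒴) (ε : ℝ) :
    gfun proj W x ε ≤ gfun proj W y (ε + dist x y) := by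
  refine pow_le_pow_left₀ (norm_nonneg _)
    (norm_comp_proj_mono hproj W measurableSet_ball measurableSet_ball ?_) 2
  intro z hz
  simp only [mem_ball] at *
  calc dist z y ≤ dist z x + dist x y := dist_triangle _ _ _
    _ < ε + dist x y := by linarith

lemma gbar_bddBelow (x : 𝒴) (ε : ℝ) :
    BddBelow (Set.range fun k : ℕ => gfun proj W x (ε + 1 / (k + 1))) :=
  ⟨0, by rintro b ⟨k, rfl⟩; exact gfun_nonneg W x _⟩

lemma gbar_nonneg (x : 𝒴) (ε : ℝ) : 0 ≤ gbar proj W x ε :=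
  Real.iInf_nonneg fun k => gfun_nonneg W x _

include hproj in
lemma gfun_le_gbar (x : 𝒴) (ε : ℝ) : gfun proj W x ε ≤ gbar proj W x ε :=
  le_ciInf fun k => gfun_mono hproj W x (le_add_of_nonneg_right (by positivity))

include hproj in
lemma gbar_le_gfun (x : 𝒴) {ε δ : ℝ} (h : ε < δ) :
    gbar proj W x ε ≤ gfun proj W x δ := by
  obtain ⟨k, hk⟩ := exists_nat_one_div_lt (sub_pos.2 h)
  exact (ciInf_le (gbar_bddBelow W x ε) k).trans (gfun_mono hproj W x (by linarith))

include hproj in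
lemma gbar_le (x : 𝒴) (ε : ℝ) : gbar proj W x ε ≤ ‖W‖ ^ 2 :=
  (ciInf_le (gbar_bddBelow W x ε) 0).trans (gfun_le hproj W x _)

include hproj in
lemma gbar_mono (x : 𝒴) : Monotone (gbar proj W x) := fun a b hab =>
  ciInf_mono (gbar_bddBelow W x a) fun k => gfun_mono hproj W x (by linarith)

include hproj in
lemma gbar_usc (ε : ℝ) : UpperSemicontinuous fun x : 𝒴 => gbar proj W x ε := by
  intro x y hy
  obtain ⟨k, hk⟩ := exists_lt_of_ciInf_lt hy
  have hball : Metric.ball x (1 / (2 * (k : ℝ) + 2)) ∈ nhds x :=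
    Metric.ball_mem_nhds _ (by positivity)
  filter_upwards [hball] with z hz
  have hdz : dist z x < 1 / (2 * (k : ℝ) + 2) := mem_ball.1 hz
  have h1 : gbar proj W z ε ≤ gfun proj W z (ε + 1 / (2 * (k : ℝ) + 2)) :=
    gbar_le_gfun hproj W z (lt_add_of_pos_right _ (by positivity))
  have h2 : gfun proj W z (ε + 1 / (2 * (k : ℝ) + 2)) ≤
      gfun proj W x (ε + 1 / (2 * (k : ℝ) + 2) + dist z x) := gfun_shift hproj W z x _
  have h3 : ε + 1 / (2 * (k : ℝ) + 2) + dist z x ≤ ε + 1 / ((k : ℝ) + 1) := by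
    have hhalf : 1 / (2 * (k : ℝ) + 2) + 1 / (2 * (k : ℝ) + 2) = 1 / ((k : ℝ) + 1) := by
      rw [← add_div, div_eq_div_iff (by positivity) (by positivity)]
      ring
    linarith
  exact lt_of_le_of_lt ((h1.trans h2).trans (gfun_mono hproj W x h3)) hk

end Metric

theorem munorm_le_integral_theta
    {𝒴 : Type*} [MetricSpace 𝒴] [CompactSpace 𝒴]
    [MeasurableSpace 𝒴] [BorelSpace 𝒴]
    (μ : Measure 𝒴) [IsProbabilityMeasure μ]
    (proj : Set 𝒴 → (Lp ℂ 2 μ →L[ℂ] Lp ℂ 2 μ))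
    (hproj : IsIndicatorProj μ proj)
    (W : Lp ℂ 2 μ →L[ℂ] Lp ℂ 2 μ) :
    ∃ θ : 𝒴 → ℝ,
      (∀ x : 𝒴, Filter.Tendsto
          (fun ε : ℝ => ‖W.comp (proj (Metric.ball x ε))‖ ^ 2)
          (nhdsWithin 0 (Set.Ioi 0)) (nhds (θ x))) ∧
      Measurable θ ∧
      (∀ x, θ x ∈ Set.Icc 0 (‖W‖ ^ 2)) ∧
      munorm μ proj W ^ 2 ≤ ∫ x, θ x ∂μ := by
  classical
  set θ : 𝒴 → ℝ := fun x => ⨅ n : ℕ, gbar proj W x (1 / (n + 1)) with hθ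
  have hbddθ : ∀ x : 𝒴, BddBelow (Set.range fun n : ℕ => gbar proj W x (1 / (n + 1))) :=
    fun x => ⟨0, by rintro b ⟨n, rfl⟩; exact gbar_nonneg W x _⟩
  -- θ is the inf of g over positive radii
  have hθeq : ∀ x, θ x = sInf (gfun proj W x '' Set.Ioi 0) := by
    intro x
    have hbddg : BddBelow (gfun proj W x '' Set.Ioi 0) :=
      ⟨0, by rintro b ⟨δ, _, rfl⟩; exact gfun_nonneg W x _⟩
    refine le_antisymm ?_ ?_
    · refine le_csInf ⟨gfun proj W x 1, mem_image_of_mem _ (by norm_num : (1:ℝ) ∈ Ioi 0)⟩ ?_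
      rintro b ⟨δ, hδ, rfl⟩
      obtain ⟨n, hn⟩ := exists_nat_one_div_lt (mem_Ioi.1 hδ)
      exact (ciInf_le (hbddθ x) n).trans (gbar_le_gfun hproj W x hn)
    · refine le_ciInf fun n => ?_
      exact (csInf_le hbddg (mem_image_of_mem _ (mem_Ioi.2 (by positivity)))).trans
        (gfun_le_gbar hproj W x _)
  refine ⟨θ, ?_, ?_, ?_, ?_⟩
  · intro x
    have h := (gfun_mono hproj W x).tendsto_nhdsGT 0
    rw [← hθeq x] at h
    exact h
  · exact Measurable.iInf fun n => (gbar_usc hproj W _).measurable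
  · intro x
    exact ⟨Real.iInf_nonneg fun n => gbar_nonneg W x _,
      (ciInf_le (hbddθ x) 0).trans (gbar_le hproj W x _)⟩
  -- main inequality
  have hμnn : 0 ≤ munorm μ proj W := Real.iInf_nonneg fun χ => Real.sqrt_nonneg _
  have hM0 : ∀ χ : Partition μ, 0 ≤ M μ proj W χ := fun χ =>
    Finset.sum_nonneg fun j _ => mul_nonneg ENNReal.toReal_nonneg (sq_nonneg _)
  have hgbint : ∀ r : ℝ, Integrable (fun x => gbar proj W x r) μ := by
    intro r
    refine ⟨((gbar_usc hproj W r).measurable).aestronglyMeasurable, ?_⟩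
    refine HasFiniteIntegral.of_bounded (C := ‖W‖ ^ 2) (Eventually.of_forall fun x => ?_)
    rw [Real.norm_eq_abs, abs_of_nonneg (gbar_nonneg W x r)]
    exact gbar_le hproj W x r
  have key : ∀ ε : ℝ, 0 < ε →
      munorm μ proj W ^ 2 ≤ ∫ x, gbar proj W x (2 * ε) ∂μ := by
    intro ε hε
    obtain ⟨s, hs⟩ := isCompact_univ.elim_finite_subcover (fun y : 𝒴 => ball y ε)
      (fun _ => isOpen_ball) (fun x _ => mem_iUnion.2 ⟨x, mem_ball_self hε⟩)
    set n := s.card with hn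
    set c : Fin n → 𝒴 := fun j => (s.equivFin.symm j : 𝒴) with hc
    set f : ℕ → Set 𝒴 := fun k => if h : k < n then ball (c ⟨k, h⟩) ε else ∅ with hf
    have hfmeas : ∀ k, MeasurableSet (f k) := by
      intro k
      simp only [hf]
      split
      · exact measurableSet_ball
      · exact MeasurableSet.empty
    have hcover : (univ : Set 𝒴) ⊆ ⋃ k, f k := by
      intro x _
      obtain ⟨y, hy, hxy⟩ := mem_iUnion₂.1 (hs (mem_univ x))
      refine mem_iUnion.2 ⟨(s.equivFin ⟨y, hy⟩ : Fin n), ?_⟩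
      have hlt : ((s.equivFin ⟨y, hy⟩ : Fin n) : ℕ) < n := (s.equivFin ⟨y, hy⟩).isLt
      simp only [hf, dif_pos hlt]
      have : c ⟨(s.equivFin ⟨y, hy⟩ : Fin n), hlt⟩ = y := by
        simp only [hc, Fin.eta, Equiv.symm_apply_apply]
      rwa [this]
    have hYmeas : ∀ j : Fin n, MeasurableSet (disjointed f j) :=
      fun j => MeasurableSet.disjointed hfmeas j
    have hYunion : (univ : Set 𝒴) ⊆ ⋃ j : Fin n, disjointed f (j : ℕ) := by
      intro x hx
      have : x ∈ ⋃ k, disjointed f k := by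
        rw [iUnion_disjointed]; exact hcover hx
      obtain ⟨k, hk⟩ := mem_iUnion.1 this
      have hklt : k < n := by
        by_contra hkn
        have : f k = ∅ := by simp only [hf, dif_neg hkn]
        exact absurd (disjointed_subset f k hk) (by simp [this])
      exact mem_iUnion.2 ⟨⟨k, hklt⟩, hk⟩
    set χ : Partition μ :=
      { J := n
        Y := fun j => disjointed f (j : ℕ)
        meas := hYmeas
        cover := by
          have : (univ \ ⋃ j : Fin n, disjointed f (j : ℕ)) = ∅ :=
            diff_eq_empty.2 hYunion
          rw [this, measure_empty]
        disj := by
          intro j k hjk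
          have hd : Disjoint (disjointed f (j : ℕ)) (disjointed f (k : ℕ)) :=
            disjoint_disjointed f (fun h => hjk (Fin.val_injective h))
          rw [Set.disjoint_iff_inter_eq_empty.1 hd, measure_empty] } with hχ
    have hsub : ∀ j : Fin n, disjointed f (j : ℕ) ⊆ ball (c j) ε := by
      intro j
      refine (disjointed_subset f j).trans ?_
      simp only [hf, dif_pos j.isLt, Fin.eta]
      exact subset_rfl
    have hstep : ∀ j : Fin n,
        (μ (disjointed f (j : ℕ))).toReal * ‖W.comp (proj (disjointed f (j : ℕ)))‖ ^ 2 ≤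
        ∫ x in disjointed f (j : ℕ), gbar proj W x (2 * ε) ∂μ := by
      intro j
      have h1 : ‖W.comp (proj (disjointed f (j : ℕ)))‖ ^ 2 ≤ gfun proj W (c j) ε :=
        pow_le_pow_left₀ (norm_nonneg _)
          (norm_comp_proj_mono hproj W (hYmeas j) measurableSet_ball (hsub j)) 2
      have h2 : ∀ x ∈ disjointed f (j : ℕ),
          ‖W.comp (proj (disjointed f (j : ℕ)))‖ ^ 2 ≤ gbar proj W x (2 * ε) := by
        intro x hx
        have hd : dist (c j) x < ε := by
          have := hsub j hx
          rw [mem_ball] at this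
          rwa [dist_comm]
        calc ‖W.comp (proj (disjointed f (j : ℕ)))‖ ^ 2 ≤ gfun proj W (c j) ε := h1
          _ ≤ gfun proj W x (ε + dist (c j) x) := gfun_shift hproj W (c j) x ε
          _ ≤ gfun proj W x (2 * ε) := gfun_mono hproj W x (by linarith)
          _ ≤ gbar proj W x (2 * ε) := gfun_le_gbar hproj W x _
      have h3 := setIntegral_ge_of_const_le_real (hYmeas j) (measure_ne_top μ _) h2
        ((hgbint (2 * ε)).integrableOn)
      rw [mul_comm] at h3; exact h3
    have hMle : M μ proj W χ ≤ ∫ x, gbar proj W x (2 * ε) ∂μ := by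
      calc M μ proj W χ ≤ ∑ j : Fin n, ∫ x in disjointed f (j : ℕ), gbar proj W x (2 * ε) ∂μ :=
            Finset.sum_le_sum fun j _ => hstep j
        _ = ∫ x in ⋃ j : Fin n, disjointed f (j : ℕ), gbar proj W x (2 * ε) ∂μ :=
            (integral_iUnion_fintype hYmeas
              (fun i j hij => disjoint_disjointed f (fun h => hij (Fin.val_injective h)))
              (fun j => (hgbint (2 * ε)).integrableOn)).symm
        _ ≤ ∫ x, gbar proj W x (2 * ε) ∂μ :=
            setIntegral_le_integral (hgbint (2 * ε))
              (Eventually.of_forall fun x => gbar_nonneg W x _)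
    have h1 : munorm μ proj W ≤ Real.sqrt (M μ proj W χ) :=
      ciInf_le ⟨0, by rintro b ⟨χ', rfl⟩; exact Real.sqrt_nonneg _⟩ χ
    calc munorm μ proj W ^ 2 ≤ Real.sqrt (M μ proj W χ) ^ 2 :=
          pow_le_pow_left₀ hμnn h1 2
      _ = M μ proj W χ := Real.sq_sqrt (hM0 χ)
      _ ≤ _ := hMle
  -- pass to the limit
  have hseq : Tendsto (fun m : ℕ => ∫ x, gbar proj W x (2 / (m + 1)) ∂μ) atTop
      (nhds (∫ x, θ x ∂μ)) := by
    refine tendsto_integral_of_dominated_convergence (fun _ => ‖W‖ ^ 2)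
      (fun m => ((gbar_usc hproj W _).measurable).aestronglyMeasurable)
      (integrable_const _)
      (fun m => Eventually.of_forall fun x => ?_)
      (Eventually.of_forall fun x => ?_)
    · rw [Real.norm_eq_abs, abs_of_nonneg (gbar_nonneg W x _)]
      exact gbar_le hproj W x _
    · have hanti : Antitone fun m : ℕ => gbar proj W x (2 / (m + 1)) := by
        intro a b hab
        refine gbar_mono hproj W x ?_
        have h1 : ((a : ℝ) + 1) ≤ (b : ℝ) + 1 := by exact_mod_cast Nat.succ_le_succ hab
        exact div_le_div_of_nonneg_left (by norm_num) (by positivity) h1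
      have h := tendsto_atTop_ciInf hanti
        ⟨0, by rintro b ⟨m, rfl⟩; exact gbar_nonneg W x _⟩
      have heq : (⨅ m : ℕ, gbar proj W x (2 / (m + 1))) = θ x := by
        refine le_antisymm (le_ciInf fun m => ?_) (le_ciInf fun m => ?_)
        · have h2 : (2 : ℝ) / ((2 * m + 1 : ℕ) + 1) = 1 / ((m : ℝ) + 1) := by
            push_cast
            rw [div_eq_div_iff (by positivity) (by positivity)]
            ring
          exact (ciInf_le ⟨0, by rintro b ⟨l, rfl⟩; exact gbar_nonneg W x _⟩
            (2 * m + 1)).trans_eq (by rw [h2])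
        · exact (ciInf_le (hbddθ x) m).trans
            (gbar_mono hproj W x (by
              have : (0:ℝ) < (m : ℝ) + 1 := by positivity
              rw [div_le_div_iff₀ this this]
              linarith))
      rwa [heq] at h
  refine ge_of_tendsto' hseq fun m => ?_
  have h := key (1 / (m + 1)) (by positivity)
  rwa [show 2 * (1 / ((m : ℝ) + 1)) = 2 / ((m : ℝ) + 1) by ring] at h
end MuNorm
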